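/- arXiv:1712.00409 — 2 statements merged into one kernel-verified Lean document; each statement's English description precedes it below -/
import Mathlib

section
/- There exists a constant c > 0 such that for every positive integer i, the expected total loss E_i of the counting estimator trained on i iid fair coin flips satisfies E_i ≥ c · i^(−1/2). In other words, the learning curve of the counting model for a fair coin is bounded below by a power law in the training set size with exponent −1/2. -/
open Finset Real

/-- Expected total loss of the counting estimator trained on `i` iid fair coin flips. -/
noncomputable def countingLoss (i : ℕ) : ℝ :=
  2 ^ (-(i : ℝ)) * ∑ k ∈ Finset.range (i + 1), (Nat.choose i k : ℝ) * |(k : ℝ) / i - 1 / 2|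

/-!
De Moivre's formula: `k C(n+1,k) = (n+1) C(n,k-1)` and `(n+1-k) C(n+1,k) = (n+1) C(n,k)`, so
`C(n+1,k) (2k - (n+1))` telescopes and the mean absolute deviation of `Binomial(n+1, 1/2)` from its
mean is `(n+1) C(n, ⌈n/2⌉) / 2^(n+1)`, i.e. `countingLoss (n+1) = C(n, ⌈n/2⌉) / 2^(n+1)`.
Since `C(2m+2, m+1) / C(2m, m) = (2m+1)(2m+2) / (m+1)^2`, induction gives the Wallis-type bound
`16^m ≤ (4m+1) C(2m,m)^2`, hence `4^(n+1) ≤ 16 (n+1) C(n, ⌈n/2⌉)^2`, and the loss is at least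
`1 / (4 √(n+1))`.
-/

namespace Nat

variable {R : Type*}

theorem choose_succ_succ_mul_two_mul_sub [CommRing R] (n k : ℕ) :
    ((n + 1).choose (k + 1) : R) * (2 * (k + 1) - (n + 1)) =
      (n + 1) * n.choose k - (n + 1) * n.choose (k + 1) := by
  have hmul : ((n + 1) * n.choose k : R) = (n + 1).choose (k + 1) * (k + 1) := by
    exact_mod_cast congrArg (Nat.cast : ℕ → R) (add_one_mul_choose_eq n k)
  have hpascal : ((n + 1).choose (k + 1) : R) = n.choose k + n.choose (k + 1) := by
    exact_mod_cast congrArg (Nat.cast : ℕ → R) (choose_succ_succ' n k)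
  linear_combination (-2) * hmul - (n + 1 : R) * hpascal

theorem sum_Ico_choose_mul_two_mul_sub [CommRing R] (n a : ℕ) (ha : a ≤ n + 1) :
    ∑ k ∈ Ico (a + 1) (n + 2), ((n + 1).choose k : R) * (2 * k - (n + 1)) =
      (n + 1) * n.choose a := by
  rw [← sum_Ico_add' _ a (n + 1) 1]
  simp only [cast_add, cast_one, choose_succ_succ_mul_two_mul_sub]
  calc ∑ j ∈ Ico a (n + 1), ((n + 1) * n.choose j - (n + 1) * n.choose (j + 1) : R)
      = -∑ j ∈ Ico a (n + 1), ((n + 1) * n.choose (j + 1) - (n + 1) * n.choose j : R) := by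
        rw [← sum_neg_distrib]
        simp only [neg_sub]
    _ = (n + 1) * n.choose a := by
        rw [sum_Ico_sub (fun j ↦ ((n + 1) * n.choose j : R)) ha, choose_succ_self]
        simp

theorem sum_range_choose_mul_two_mul_sub [CommRing R] (n : ℕ) :
    ∑ k ∈ range (n + 2), ((n + 1).choose k : R) * (2 * k - (n + 1)) = 0 := by
  rw [← sum_range_add_sum_Ico _ (by omega : 1 ≤ n + 2),
    sum_Ico_choose_mul_two_mul_sub n 0 (by omega)]
  simp

theorem sum_range_choose_mul_abs_two_mul_sub [CommRing R] [LinearOrder R] [IsStrictOrderedRing R]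
    (n : ℕ) :
    ∑ k ∈ range (n + 2), ((n + 1).choose k : R) * |2 * (k : R) - (n + 1)| =
      2 * (n + 1) * n.choose ((n + 1) / 2) := by
  set a := (n + 1) / 2
  have hlow : ∀ k ∈ range (a + 1), ((n + 1).choose k : R) * |2 * (k : R) - (n + 1)| =
      -(((n + 1).choose k : R) * (2 * k - (n + 1))) := by
    intro k hk
    have : (2 * k : R) ≤ n + 1 := by exact_mod_cast (by simp at hk; omega : 2 * k ≤ n + 1)
    rw [abs_of_nonpos (by linarith)]
    ring
  have hhigh : ∀ k ∈ Ico (a + 1) (n + 2), ((n + 1).choose k : R) * |2 * (k : R) - (n + 1)| =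
      ((n + 1).choose k : R) * (2 * k - (n + 1)) := by
    intro k hk
    have : (n + 1 : R) ≤ 2 * k := by exact_mod_cast (by simp at hk; omega : n + 1 ≤ 2 * k)
    rw [abs_of_nonneg (by linarith)]
  have hzero := sum_range_choose_mul_two_mul_sub (R := R) n
  rw [← sum_range_add_sum_Ico _ (by omega : a + 1 ≤ n + 2)] at hzero ⊢
  rw [sum_congr rfl hlow, sum_congr rfl hhigh, sum_neg_distrib]
  rw [sum_Ico_choose_mul_two_mul_sub n a (by omega)] at hzero ⊢
  linarith

theorem sixteen_pow_le_mul_centralBinom_sq (m : ℕ) :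
    16 ^ m ≤ (4 * m + 1) * m.centralBinom ^ 2 := by
  induction m with
  | zero => simp
  | succ m ih =>
    have hrec := succ_mul_centralBinom_succ m
    have hratio : 4 * (m + 1) ^ 2 * (4 * m + 1) ≤ (4 * m + 5) * (2 * m + 1) ^ 2 := by
      ring_nf
      omega
    refine le_of_mul_le_mul_left (a := (m + 1) ^ 2) ?_ (by positivity)
    calc (m + 1) ^ 2 * 16 ^ (m + 1) = 4 * (4 * (m + 1) ^ 2) * 16 ^ m := by ring
      _ ≤ 4 * (4 * (m + 1) ^ 2) * ((4 * m + 1) * m.centralBinom ^ 2) := by gcongr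
      _ = 4 * (4 * (m + 1) ^ 2 * (4 * m + 1)) * m.centralBinom ^ 2 := by ring
      _ ≤ 4 * ((4 * m + 5) * (2 * m + 1) ^ 2) * m.centralBinom ^ 2 := by gcongr
      _ = (4 * (m + 1) + 1) * ((m + 1) * (m + 1).centralBinom) ^ 2 := by rw [hrec]; ring
      _ = (m + 1) ^ 2 * ((4 * (m + 1) + 1) * (m + 1).centralBinom ^ 2) := by ring

theorem centralBinom_succ_eq_two_mul_choose (m : ℕ) :
    (m + 1).centralBinom = 2 * (2 * m + 1).choose (m + 1) := by
  rw [centralBinom_eq_two_mul_choose, show 2 * (m + 1) = 2 * m + 1 + 1 by ring,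
    choose_succ_succ', choose_symm_half]
  ring

theorem four_pow_le_mul_choose_half_sq (n : ℕ) :
    4 ^ (n + 1) ≤ 16 * (n + 1) * n.choose ((n + 1) / 2) ^ 2 := by
  obtain ⟨m, rfl | rfl⟩ := even_or_odd' n
  · have h := sixteen_pow_le_mul_centralBinom_sq m
    rw [centralBinom_eq_two_mul_choose] at h
    rw [show (2 * m + 1) / 2 = m by omega]
    calc 4 ^ (2 * m + 1) = 4 * 16 ^ m := by rw [pow_succ, pow_mul]; ring
      _ ≤ 4 * ((4 * m + 1) * (2 * m).choose m ^ 2) := by gcongr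
      _ ≤ 16 * (2 * m + 1) * (2 * m).choose m ^ 2 := by nlinarith
  · have h := sixteen_pow_le_mul_centralBinom_sq (m + 1)
    rw [centralBinom_succ_eq_two_mul_choose] at h
    rw [show (2 * m + 1 + 1) / 2 = m + 1 by omega]
    calc 4 ^ (2 * m + 1 + 1) = 16 ^ (m + 1) := by
          rw [show 2 * m + 1 + 1 = 2 * (m + 1) by ring, pow_mul]; rfl
      _ ≤ (4 * (m + 1) + 1) * (2 * (2 * m + 1).choose (m + 1)) ^ 2 := h
      _ ≤ 16 * (2 * m + 1 + 1) * (2 * m + 1).choose (m + 1) ^ 2 := by nlinarith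

end Nat

theorem countingLoss_succ (n : ℕ) :
    countingLoss (n + 1) = n.choose ((n + 1) / 2) / 2 ^ (n + 1) := by
  have hdev (k : ℕ) :
      |(k : ℝ) / ↑(n + 1) - 1 / 2| = |2 * (k : ℝ) - (n + 1)| / (2 * (n + 1)) := by
    rw [← abs_of_pos (by positivity : (0 : ℝ) < 2 * (n + 1)), ← abs_div]
    congr 1
    field_simp
    push_cast
    ring
  simp only [countingLoss, hdev, mul_div_assoc', ← sum_div,
    Nat.sum_range_choose_mul_abs_two_mul_sub]
  rw [rpow_neg zero_le_two, rpow_natCast]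
  field_simp

theorem counting_loss_power_law_lower_bound :
    ∃ c : ℝ, 0 < c ∧ ∀ i : ℕ, 0 < i →
      c * (i : ℝ) ^ (-(1 / 2 : ℝ)) ≤ countingLoss i := by
  refine ⟨1 / 4, by norm_num, fun i hi ↦ ?_⟩
  obtain ⟨n, rfl⟩ := Nat.exists_eq_add_one_of_ne_zero hi.ne'
  have hpow : (2 : ℝ) ^ (n + 1) ≤ 4 * √(n + 1 : ℕ) * n.choose ((n + 1) / 2) := by
    refine (pow_le_pow_iff_left₀ (by positivity) (by positivity) two_ne_zero).1 ?_
    rw [mul_pow, mul_pow, sq_sqrt (by positivity), ← pow_mul, mul_comm (n + 1), pow_mul]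
    exact_mod_cast Nat.four_pow_le_mul_choose_half_sq n
  rw [countingLoss_succ, rpow_neg (by positivity), ← sqrt_eq_rpow, le_div_iff₀ (by positivity)]
  calc 1 / 4 * (√(n + 1 : ℕ))⁻¹ * 2 ^ (n + 1)
      ≤ 1 / 4 * (√(n + 1 : ℕ))⁻¹ * (4 * √(n + 1 : ℕ) * n.choose ((n + 1) / 2)) := by gcongr
    _ = n.choose ((n + 1) / 2) := by field_simp
end

section
/- For every even positive integer i, the expected total loss of the counting estimator has the closed form E_i = C(i, i/2) / 2^(i+1), where C(i, i/2) is the central binomial coefficient. -/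
open Finset Real

/-!
Writing `|k / i - 1 / 2| = |i - 2k| / (2i)`, the loss is a binomial sum of `|i - 2k|`.
The terms `(n - 2k) C(n, k) = (k + 1) C(n, k + 1) - k C(n, k)` telescope, so their partial sums
are `r C(n, r)` and their full sum vanishes; splitting the absolute value where `n - 2k` changes
sign therefore gives `Σ C(n, k) |n - 2k| = 2 r C(n, r)` with `r = ⌈n / 2⌉`.
-/

theorem Nat.succ_mul_choose_succ_eq_sub_mul_choose (n k : ℕ) :
    ((k + 1 : ℕ) : ℤ) * n.choose (k + 1) = ((n : ℤ) - k) * n.choose k := by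
  rcases le_or_gt k n with hkn | hnk
  · have h := congrArg (Nat.cast (R := ℤ)) (Nat.choose_succ_right_eq n k)
    push_cast [Nat.cast_sub hkn] at h ⊢
    linarith
  · simp [Nat.choose_eq_zero_of_lt hnk, Nat.choose_eq_zero_of_lt (Nat.lt_succ_of_lt hnk)]

theorem Nat.sum_range_sub_two_mul_mul_choose (n r : ℕ) :
    ∑ k ∈ range r, ((n : ℤ) - 2 * k) * n.choose k = r * n.choose r := by
  have hstep : ∀ k, ((n : ℤ) - 2 * k) * n.choose k
      = ((k + 1 : ℕ) : ℤ) * n.choose (k + 1) - (k : ℤ) * n.choose k := fun k => by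
    rw [Nat.succ_mul_choose_succ_eq_sub_mul_choose]; ring
  simp only [hstep, Finset.sum_range_sub (fun k => (k : ℤ) * n.choose k)]
  simp

theorem Nat.sum_range_choose_mul_abs_sub_two_mul (n : ℕ) :
    ∑ k ∈ range (n + 1), (n.choose k : ℤ) * |(n : ℤ) - 2 * k|
      = 2 * ((n + 1) / 2 : ℕ) * n.choose ((n + 1) / 2) := by
  set r := (n + 1) / 2
  have hlow : ∀ k ∈ range r, (n.choose k : ℤ) * |(n : ℤ) - 2 * k|
      = ((n : ℤ) - 2 * k) * n.choose k := fun k hk => by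
    rw [abs_of_nonneg (by simp at hk; omega), mul_comm]
  have hhigh : ∀ k ∈ Ico r (n + 1), (n.choose k : ℤ) * |(n : ℤ) - 2 * k|
      = -(((n : ℤ) - 2 * k) * n.choose k) := fun k hk => by
    rw [abs_of_nonpos (by simp at hk; omega)]; ring
  have hsplit := Finset.sum_range_add_sum_Ico (fun k => ((n : ℤ) - 2 * k) * n.choose k)
    (show r ≤ n + 1 by omega)
  rw [Nat.sum_range_sub_two_mul_mul_choose, Nat.sum_range_sub_two_mul_mul_choose,
    Nat.choose_succ_self, Nat.cast_zero, mul_zero] at hsplit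
  rw [← Finset.sum_range_add_sum_Ico _ (show r ≤ n + 1 by omega), Finset.sum_congr rfl hlow,
    Finset.sum_congr rfl hhigh, Finset.sum_neg_distrib, Nat.sum_range_sub_two_mul_mul_choose]
  linarith

theorem countingLoss_eq_of_ne_zero {i : ℕ} (hi : i ≠ 0) :
    countingLoss i = ((i + 1) / 2 : ℕ) * i.choose ((i + 1) / 2) / (i * 2 ^ i) := by
  have hi' : (i : ℝ) ≠ 0 := by exact_mod_cast hi
  have hterm : ∀ k ∈ range (i + 1), (i.choose k : ℝ) * |(k : ℝ) / i - 1 / 2|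
      = ((i.choose k : ℤ) * |(i : ℤ) - 2 * k| : ℤ) / (2 * i) := fun k _ => by
    rw [show (k : ℝ) / i - 1 / 2 = -((i - 2 * k) / (2 * i)) by field_simp; ring, abs_neg,
      abs_div, abs_of_pos (by positivity : (0 : ℝ) < 2 * i)]
    push_cast
    ring
  rw [countingLoss, Finset.sum_congr rfl hterm, ← Finset.sum_div, ← Int.cast_sum,
    Nat.sum_range_choose_mul_abs_sub_two_mul, Real.rpow_neg zero_le_two, Real.rpow_natCast]
  simp only [Int.cast_mul, Int.cast_ofNat, Int.cast_natCast]
  field_simp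

theorem counting_loss_even_closed_form_general (i : ℕ) (heven : Even i) :
    countingLoss i = (Nat.choose i (i / 2) : ℝ) / 2 ^ (i + 1) := by
  obtain rfl | hi := eq_or_ne i 0
  · -- `k / 0 = 0`, so both sides are `1 / 2`
    norm_num [countingLoss]
  obtain ⟨m, rfl⟩ := heven
  rw [countingLoss_eq_of_ne_zero hi, show (m + m + 1) / 2 = m by omega,
    show (m + m) / 2 = m by omega]
  have hm : (m : ℝ) ≠ 0 := by exact_mod_cast (show m ≠ 0 by omega)
  push_cast
  field_simp
  ring

theorem counting_loss_even_closed_form (i : ℕ) (hi : 0 < i) (heven : Even i) :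
    countingLoss i = (Nat.choose i (i / 2) : ℝ) / 2 ^ (i + 1) :=
  counting_loss_even_closed_form_general i heven
end
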